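/- For any finite simple graph H, the dominating graph D(H) has no Hamilton cycle. -/

import Mathlib

open SimpleGraph Finset
open scoped symmDiff

variable {V : Type*}

/-- `D` is a dominating set of `G`: every vertex outside `D` has a neighbor in `D`. -/
def IsDomSet [DecidableEq V] (G : SimpleGraph V) (D : Finset V) : Prop :=
  ∀ z : V, z ∉ D → ∃ y ∈ D, G.Adj y z

/-- The dominating graph of `G`: vertices are the dominating sets of `G`, two of them
adjacent iff their symmetric difference is a singleton. -/
def DomGraph [DecidableEq V] (G : SimpleGraph V) :
    SimpleGraph {D : Finset V // IsDomSet G D} where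
  Adj X Y := (X.1 ∆ Y.1).card = 1
  symm := ⟨fun X Y h => by simpa [symmDiff_comm] using h⟩
  loopless := ⟨fun X h => by simp [symmDiff_self] at h⟩

/-- A graph has a Hamilton path iff some walk visits every vertex exactly once. -/
def HasHamiltonPath {α : Type*} [DecidableEq α] (G : SimpleGraph α) : Prop :=
  ∃ (a b : α) (p : G.Walk a b), p.IsHamiltonian

/-!
Adjacent dominating sets differ in exactly one element, so the parity of `#X` properly
2-colours `DomGraph G`; hence every closed walk in it, in particular a Hamilton cycle, has even
length. But a Hamilton cycle has length the number of dominating sets, which is odd (Brouwer):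
count the pairs `(A, B)` with no vertex of `B` in the closed neighbourhood of `A`. Swapping `A`
and `B` is an involution on these pairs whose only fixed point is `(∅, ∅)`, so there are oddly
many; and for fixed `A` the admissible `B` are the `2 ^ k` subsets of the `k` vertices that `A`
does not dominate, an odd number exactly when `A` is dominating.
-/

theorem Finset.card_symmDiff_add_two_mul_card_inter {α : Type*} [DecidableEq α] (s t : Finset α) :
    #(s ∆ t) + 2 * #(s ∩ t) = #s + #t := by
  rw [← card_union_add_card_inter, symmDiff_eq_sup_sdiff_inf, sup_eq_union, inf_eq_inter,
    card_sdiff_of_subset inter_subset_union]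
  have := card_le_card (inter_subset_union (s := s) (t := t))
  omega

theorem Finset.even_card_iff_odd_card_of_card_symmDiff_eq_one {α : Type*} [DecidableEq α]
    {s t : Finset α} (h : #(s ∆ t) = 1) : Even #s ↔ Odd #t := by
  have := card_symmDiff_add_two_mul_card_inter s t
  rw [h] at this
  grind

theorem Finset.odd_card_of_involution {α : Type*} [DecidableEq α] {s : Finset α} {x : α}
    (f : α → α) (hf : ∀ a ∈ s, f a ∈ s) (hff : ∀ a ∈ s, f (f a) = a) (hx : x ∈ s) (hfx : f x = x)
    (hfix : ∀ a ∈ s, f a = a → a = x) : Odd #s := by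
  have hrest : ∑ _a ∈ s.erase x, (1 : ZMod 2) = 0 := by
    refine sum_involution (fun a _ => f a) (fun _ _ => by decide)
      (fun a ha _ hfa => ne_of_mem_erase ha (hfix a (mem_of_mem_erase ha) hfa))
      (fun a ha => mem_erase.2 ⟨fun hfa => ne_of_mem_erase ha ?_, hf a (mem_of_mem_erase ha)⟩)
      (fun a ha => hff a (mem_of_mem_erase ha))
    rw [← hff a (mem_of_mem_erase ha), hfa, hfx]
  rw [← card_erase_add_one hx]
  simp only [sum_const, nsmul_eq_mul, mul_one, ZMod.natCast_eq_zero_iff_even] at hrest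
  exact hrest.add_one

section Domination

variable {α : Type*} [Fintype α] [DecidableEq α] (r : α → α → Prop) [DecidableRel r]

def undominated (A : Finset α) : Finset α := {b | ∀ a ∈ A, ¬r a b}

def separatedPairs : Finset (Σ _ : Finset α, Finset α) :=
  univ.sigma fun A => (undominated r A).powerset

theorem card_separatedPairs : #(separatedPairs r) = ∑ A, 2 ^ #(undominated r A) := by
  simp only [separatedPairs, card_sigma, card_powerset]

variable {r}

theorem mem_separatedPairs {A B : Finset α} :
    ⟨A, B⟩ ∈ separatedPairs r ↔ ∀ a ∈ A, ∀ b ∈ B, ¬r a b := by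
  simp only [separatedPairs, mem_sigma, mem_univ, mem_powerset, true_and, subset_iff,
    undominated, mem_filter]
  tauto

theorem odd_card_separatedPairs (hrefl : ∀ a, r a a) (hsymm : ∀ a b, r a b → r b a) :
    Odd #(separatedPairs r) := by
  refine odd_card_of_involution (fun p => ⟨p.2, p.1⟩) (fun ⟨A, B⟩ h => ?_) (fun _ _ => rfl)
    (x := ⟨∅, ∅⟩) (by simp [mem_separatedPairs]) rfl (fun ⟨A, B⟩ h hAB => ?_)
  · rw [mem_separatedPairs] at h ⊢
    exact fun b hb a ha hba => h a ha b hb (hsymm b a hba)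
  · obtain rfl : B = A := congrArg Sigma.fst hAB
    obtain rfl : B = ∅ := eq_empty_of_forall_notMem fun a ha =>
      mem_separatedPairs.1 h a ha a ha (hrefl a)
    rfl

theorem odd_card_undominated_eq_empty (hrefl : ∀ a, r a a) (hsymm : ∀ a b, r a b → r b a) :
    Odd #{A : Finset α | undominated r A = ∅} := by
  have hcount : (#(separatedPairs r) : ZMod 2) = #{A : Finset α | undominated r A = ∅} := by
    rw [card_separatedPairs, card_filter, Nat.cast_sum, Nat.cast_sum]
    refine sum_congr rfl fun A _ => ?_
    rw [Nat.cast_pow, Nat.cast_ofNat, show (2 : ZMod 2) = 0 from rfl, zero_pow_eq]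
    simp only [card_eq_zero, Nat.cast_ite, Nat.cast_one, Nat.cast_zero]
  rw [← ZMod.natCast_eq_one_iff_odd, ← hcount, ZMod.natCast_eq_one_iff_odd]
  exact odd_card_separatedPairs hrefl hsymm

end Domination

theorem isDomSet_iff_undominated_eq_empty [Fintype V] [DecidableEq V] (G : SimpleGraph V)
    [DecidableRel G.Adj] (D : Finset V) :
    IsDomSet G D ↔ undominated (fun a b => a = b ∨ G.Adj a b) D = ∅ := by
  simp only [IsDomSet, undominated, filter_eq_empty_iff, mem_univ, true_implies, not_forall,
    not_not, exists_prop]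
  refine ⟨fun h z => ?_, fun h z hz => ?_⟩
  · by_cases hz : z ∈ D
    · exact ⟨z, hz, .inl rfl⟩
    · obtain ⟨y, hy, hyz⟩ := h z hz
      exact ⟨y, hy, .inr hyz⟩
  · obtain ⟨y, hy, rfl | hyz⟩ := h (x := z)
    · exact absurd hy hz
    · exact ⟨y, hy, hyz⟩

theorem odd_card_isDomSet [Fintype V] [DecidableEq V] (G : SimpleGraph V) :
    Odd (Nat.card {D : Finset V // IsDomSet G D}) := by
  classical
  rw [Nat.card_eq_fintype_card, Fintype.card_subtype]
  simp_rw [isDomSet_iff_undominated_eq_empty]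
  exact odd_card_undominated_eq_empty (fun _ => .inl rfl) fun _ _ => .imp Eq.symm Adj.symm

def DomGraph.parityColoring [DecidableEq V] (G : SimpleGraph V) : (DomGraph G).Coloring Bool :=
  Coloring.mk (fun X => decide (Even #X.1)) fun h => by
    rw [Ne, decide_eq_decide, even_card_iff_odd_card_of_card_symmDiff_eq_one h,
      ← Nat.not_even_iff_odd]
    exact not_iff_self

theorem domGraph_no_hamilton_cycle [Fintype V] [DecidableEq V] (G : SimpleGraph V) :
    ¬ ∃ (X : {D : Finset V // IsDomSet G D}) (p : (DomGraph G).Walk X X),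
      p.IsHamiltonianCycle := by
  classical
  rintro ⟨X, p, hp⟩
  have heven : Even p.length := ((DomGraph.parityColoring G).even_length_iff_congr p).2 Iff.rfl
  rw [hp.length_eq, ← Nat.card_eq_fintype_card] at heven
  exact Nat.not_even_iff_odd.2 (odd_card_isDomSet G) heven
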